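/- arXiv:1502.05890 — 2 statements merged into one kernel-verified Lean document; each statement's English description precedes it below -/
import Mathlib

section
/- Under the setup of the previous statement, the matrix S = E[z z^T] ∈ R^{L×L} has spectral decomposition S = λ_u·u u^T + λ_P·P, where u = 1/√L, P = I − u u^T, λ_u = ((K−L)/(K−1))·V_y + L·ȳ², and λ_P = (K/(K−1))·V_y. In particular, both eigenvalues are at least (K/(K−1))·V_y ≥ V_y. -/
/-!
Permutations of `A` act on injections `Fin L ↪ A` by postcomposition; they preserve the number
of injections in each fibre of `f ↦ f i` and of `f ↦ (f i, f j)`, and act transitively on `A`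
and on pairs of distinct elements. So `z_i` is uniform on `A` and, for `i ≠ j`, `(z_i, z_j)` is
uniform on ordered pairs of distinct actions. Hence `S` has diagonal `(1/K) Σ y²` and
off-diagonal `((Σ y)² - Σ y²) / (K (K - 1))`, i.e. `S = λ_P I + (λ_u - λ_P) U`. The eigenvalue
bounds come from `0 ≤ V_y ≤ (K - 1) ȳ²`, the second being `Σ y² ≤ (Σ y)²` for `y ≥ 0`.
-/

open Finset

theorem Finset.card_nsmul_sum_comp_of_card_fiber_eq {α β M : Type*} [DecidableEq β]
    [AddCommMonoid M] {s : Finset α} {t : Finset β} {φ : α → β} (hφ : ∀ x ∈ s, φ x ∈ t)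
    (hfib : ∀ b ∈ t, ∀ b' ∈ t, #{x ∈ s | φ x = b} = #{x ∈ s | φ x = b'}) (g : β → M) :
    #t • ∑ x ∈ s, g (φ x) = #s • ∑ b ∈ t, g b := by
  obtain rfl | ⟨b₀, hb₀⟩ := t.eq_empty_or_nonempty
  · simp
  set c := #{x ∈ s | φ x = b₀}
  have hsum : ∑ x ∈ s, g (φ x) = c • ∑ b ∈ t, g b := by
    rw [← sum_fiberwise_of_maps_to hφ, smul_sum]
    refine sum_congr rfl fun b hb => ?_
    rw [sum_congr rfl fun x hx => congrArg g (mem_filter.mp hx).2, sum_const, hfib b hb b₀ hb₀]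
  have hcard : #s = #t * c := by
    rw [card_eq_sum_card_fiberwise hφ, sum_congr rfl fun b hb => hfib b hb b₀ hb₀, sum_const,
      smul_eq_mul]
  rw [hsum, hcard, smul_smul]

theorem Finset.sum_offDiag_mul {α R : Type*} [DecidableEq α] [CommRing R] (s : Finset α)
    (f : α → R) :
    ∑ p ∈ s.offDiag, f p.1 * f p.2 = (∑ a ∈ s, f a) ^ 2 - ∑ a ∈ s, f a ^ 2 := by
  have hsplit := sum_union (disjoint_diag_offDiag s) (f := fun p : α × α => f p.1 * f p.2)
  rw [diag_union_offDiag, sum_product, sum_diag] at hsplit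
  simp only [← mul_sum, ← sum_mul] at hsplit
  rw [sq, hsplit]
  simp only [sq]
  ring

namespace Function.Embedding

variable {ι A : Type*} [Fintype ι] [Fintype A]

theorem card_filter_trans_perm (σ : Equiv.Perm A) (p : (ι ↪ A) → Prop) [DecidablePred p] :
    #{f : ι ↪ A | p (f.trans σ.toEmbedding)} = #{f | p f} :=
  card_equiv (Equiv.embeddingCongr (Equiv.refl ι) σ) fun _ => by
    simp only [mem_filter, mem_univ, true_and, Equiv.embeddingCongr_apply]; rfl

variable [DecidableEq A]

theorem card_filter_apply_eq (i : ι) (a b : A) :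
    #{f : ι ↪ A | f i = a} = #{f : ι ↪ A | f i = b} := by
  simpa [Equiv.swap_apply_eq_iff] using
    card_filter_trans_perm (Equiv.swap a b) (fun f : ι ↪ A => f i = b)

theorem card_filter_apply_pair_eq (i j : ι) {a b c d : A} (hab : a ≠ b) (hcd : c ≠ d) :
    #{f : ι ↪ A | f i = a ∧ f j = b} = #{f : ι ↪ A | f i = c ∧ f j = d} := by
  obtain ⟨σ, hσa, hσb⟩ :=
    MulAction.is_two_pretransitive_iff.mp (Equiv.Perm.isMultiplyPretransitive A 2) hab hcd
  rw [Equiv.Perm.smul_def] at hσa hσb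
  simpa [← hσa, ← hσb] using
    card_filter_trans_perm σ (fun f : ι ↪ A => f i = c ∧ f j = d)

variable {M : Type*} [AddCommMonoid M]

theorem card_nsmul_sum_apply (i : ι) (g : A → M) :
    Fintype.card A • ∑ f : ι ↪ A, g (f i) = Fintype.card (ι ↪ A) • ∑ a, g a :=
  card_nsmul_sum_comp_of_card_fiber_eq (fun _ _ => mem_univ _)
    (fun a _ b _ => card_filter_apply_eq i a b) g

theorem card_offDiag_nsmul_sum_apply_apply {i j : ι} (hij : i ≠ j) (g : A × A → M) :
    #(univ : Finset A).offDiag • ∑ f : ι ↪ A, g (f i, f j)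
      = Fintype.card (ι ↪ A) • ∑ p ∈ (univ : Finset A).offDiag, g p := by
  refine card_nsmul_sum_comp_of_card_fiber_eq (fun f _ => ?_) (fun p hp q hq => ?_) g
  · simpa using f.injective.ne hij
  · simp only [mem_offDiag, mem_univ, true_and] at hp hq
    simpa only [Prod.ext_iff] using card_filter_apply_pair_eq i j hp hq

theorem mean_sq_apply [Nonempty (ι ↪ A)] (y : A → ℝ) (i : ι) :
    1 / (Fintype.card (ι ↪ A) : ℝ) * ∑ f : ι ↪ A, y (f i) * y (f i)
      = 1 / (Fintype.card A : ℝ) * ∑ a, y a ^ 2 := by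
  obtain ⟨f₀⟩ := ‹Nonempty (ι ↪ A)›
  have : Nonempty A := ⟨f₀ i⟩
  have hN : (Fintype.card (ι ↪ A) : ℝ) ≠ 0 := Nat.cast_ne_zero.mpr Fintype.card_ne_zero
  have hK : (Fintype.card A : ℝ) ≠ 0 := Nat.cast_ne_zero.mpr Fintype.card_ne_zero
  have h := card_nsmul_sum_apply i fun a => y a ^ 2
  rw [nsmul_eq_mul, nsmul_eq_mul] at h
  simp only [← sq]
  field_simp
  linear_combination h

theorem mean_mul_apply_of_ne [Nonempty (ι ↪ A)] (y : A → ℝ) {i j : ι} (hij : i ≠ j) :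
    1 / (Fintype.card (ι ↪ A) : ℝ) * ∑ f : ι ↪ A, y (f i) * y (f j)
      = ((∑ a, y a) ^ 2 - ∑ a, y a ^ 2)
          / ((Fintype.card A : ℝ) * ((Fintype.card A : ℝ) - 1)) := by
  obtain ⟨f₀⟩ := ‹Nonempty (ι ↪ A)›
  have hN : (Fintype.card (ι ↪ A) : ℝ) ≠ 0 := Nat.cast_ne_zero.mpr Fintype.card_ne_zero
  have hD : (#(univ : Finset A).offDiag : ℝ) ≠ 0 := Nat.cast_ne_zero.mpr <|
    card_ne_zero.mpr ⟨(f₀ i, f₀ j), by simpa using f₀.injective.ne hij⟩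
  have hcard : (#(univ : Finset A).offDiag : ℝ)
      = (Fintype.card A : ℝ) * ((Fintype.card A : ℝ) - 1) := by
    rw [offDiag_card, card_univ, Nat.cast_sub (Nat.le_mul_self _)]
    push_cast
    ring
  have h := card_offDiag_nsmul_sum_apply_apply hij fun p => y p.1 * y p.2
  rw [nsmul_eq_mul, nsmul_eq_mul, sum_offDiag_mul] at h
  rw [hcard] at h hD
  rw [eq_div_iff hD]
  field_simp
  linear_combination h

end Function.Embedding

section Moments

variable {A : Type*} [Fintype A]

theorem sq_mean_le_mean_sq (y : A → ℝ) :
    (1 / (Fintype.card A : ℝ) * ∑ a, y a) ^ 2 ≤ 1 / (Fintype.card A : ℝ) * ∑ a, y a ^ 2 := by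
  simpa only [one_div_mul_eq_div, card_univ] using
    sum_div_card_sq_le_sum_sq_div_card (s := univ) (f := y)

theorem mean_sq_le_card_mul_sq_mean {y : A → ℝ} (hy : ∀ a, 0 ≤ y a) :
    1 / (Fintype.card A : ℝ) * ∑ a, y a ^ 2
      ≤ Fintype.card A * (1 / (Fintype.card A : ℝ) * ∑ a, y a) ^ 2 := by
  obtain hK | hK := (Fintype.card A).eq_zero_or_pos
  · simp [hK]
  calc 1 / (Fintype.card A : ℝ) * ∑ a, y a ^ 2 ≤ 1 / (Fintype.card A : ℝ) * (∑ a, y a) ^ 2 := by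
        gcongr
        exact sum_sq_le_sq_sum_of_nonneg fun a _ => hy a
    _ = Fintype.card A * (1 / (Fintype.card A : ℝ) * ∑ a, y a) ^ 2 := by
        field_simp

end Moments

theorem le_sub_div_mul_add_mul_sq {K L V m : ℝ} (hK : 1 < K) (hL : 0 ≤ L)
    (hVm : V ≤ (K - 1) * m ^ 2) : K / (K - 1) * V ≤ (K - L) / (K - 1) * V + L * m ^ 2 := by
  have hK1 : K - 1 ≠ 0 := by linarith
  have hgap : (K - L) / (K - 1) * V + L * m ^ 2 - K / (K - 1) * V
      = L * ((K - 1) * m ^ 2 - V) / (K - 1) := by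
    field_simp
    ring
  have hgap_nonneg : 0 ≤ L * ((K - 1) * m ^ 2 - V) / (K - 1) :=
    div_nonneg (mul_nonneg hL (sub_nonneg.mpr hVm)) (by linarith)
  linarith

theorem second_moment_matrix_spectral_general {A : Type*} [Fintype A] (K L : ℕ)
    (hK : K = Fintype.card A) (hK2 : 2 ≤ K) (hLK : L ≤ K)
    (y : A → ℝ) (hy : ∀ a, y a ∈ Set.Icc (0 : ℝ) 1) :
    let ybar : ℝ := (1 / (K : ℝ)) * ∑ a : A, y a
    let Vy : ℝ := (1 / (K : ℝ)) * ∑ a : A, (y a) ^ 2 - ybar ^ 2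
    let lu : ℝ := (((K : ℝ) - (L : ℝ)) / ((K : ℝ) - 1)) * Vy + (L : ℝ) * ybar ^ 2
    let lP : ℝ := ((K : ℝ) / ((K : ℝ) - 1)) * Vy
    let U : Matrix (Fin L) (Fin L) ℝ := Matrix.of fun _ _ => 1 / (L : ℝ)
    let P : Matrix (Fin L) (Fin L) ℝ := 1 - U
    (Matrix.of fun i j =>
        (1 / (Fintype.card (Fin L ↪ A) : ℝ)) * ∑ f : Fin L ↪ A, y (f i) * y (f j))
      = lu • U + lP • P ∧
    lu ≥ ((K : ℝ) / ((K : ℝ) - 1)) * Vy ∧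
    ((K : ℝ) / ((K : ℝ) - 1)) * Vy ≥ Vy := by
  classical
  intro ybar Vy lu lP U P
  subst hK
  have hK1 : (1 : ℝ) < Fintype.card A := by exact_mod_cast hK2
  have hVy : 0 ≤ Vy := sub_nonneg.mpr (sq_mean_le_mean_sq y)
  have hVy_le : Vy ≤ (Fintype.card A - 1) * ybar ^ 2 := by
    linarith [mean_sq_le_card_mul_sq_mean fun a => (hy a).1]
  refine ⟨?_, le_sub_div_mul_add_mul_sq hK1 (Nat.cast_nonneg L) hVy_le,
    le_mul_of_one_le_left hVy ((one_le_div (by linarith)).mpr (by linarith))⟩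
  have : Nonempty (Fin L ↪ A) := Function.Embedding.nonempty_of_card_le (by simpa using hLK)
  ext i j
  have hL : (L : ℝ) ≠ 0 := Nat.cast_ne_zero.mpr (Fin.pos i).ne'
  have hK0 : (Fintype.card A : ℝ) - 1 ≠ 0 := by linarith
  simp only [Matrix.of_apply, Matrix.add_apply, Matrix.smul_apply, Matrix.sub_apply,
    smul_eq_mul, U, P, lu, lP, Vy, ybar]
  rcases eq_or_ne i j with rfl | hij
  · rw [Function.Embedding.mean_sq_apply, Matrix.one_apply_eq]
    field_simp
    ring
  · rw [Function.Embedding.mean_mul_apply_of_ne y hij, Matrix.one_apply_ne hij]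
    field_simp
    ring

/-- Spectral decomposition of S = E[z zᵀ] for z the reward vector of a uniformly random
ordered L-tuple of distinct actions: S = λ_u·uuᵀ + λ_P·P with u = 1/√L (so uuᵀ has entries
1/L), P = I − uuᵀ, λ_u = ((K−L)/(K−1))V_y + L·ȳ², λ_P = (K/(K−1))V_y; both eigenvalues are
at least (K/(K−1))·V_y ≥ V_y. -/
theorem second_moment_matrix_spectral {A : Type*} [Fintype A] [DecidableEq A] (K L : ℕ)
    (hK : K = Fintype.card A) (hK2 : 2 ≤ K) (hL1 : 1 ≤ L) (hLK : L ≤ K)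
    (y : A → ℝ) (hy : ∀ a, y a ∈ Set.Icc (0 : ℝ) 1) :
    let ybar : ℝ := (1 / (K : ℝ)) * ∑ a : A, y a
    let Vy : ℝ := (1 / (K : ℝ)) * ∑ a : A, (y a) ^ 2 - ybar ^ 2
    let lu : ℝ := (((K : ℝ) - (L : ℝ)) / ((K : ℝ) - 1)) * Vy + (L : ℝ) * ybar ^ 2
    let lP : ℝ := ((K : ℝ) / ((K : ℝ) - 1)) * Vy
    let U : Matrix (Fin L) (Fin L) ℝ := Matrix.of fun _ _ => 1 / (L : ℝ)
    let P : Matrix (Fin L) (Fin L) ℝ := 1 - U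
    (Matrix.of fun i j =>
        (1 / (Fintype.card (Fin L ↪ A) : ℝ)) * ∑ f : Fin L ↪ A, y (f i) * y (f j))
      = lu • U + lP • P ∧
    lu ≥ ((K : ℝ) / ((K : ℝ) - 1)) * Vy ∧
    ((K : ℝ) / ((K : ℝ) - 1)) * Vy ≥ Vy :=
  second_moment_matrix_spectral_general K L hK hK2 hLK y hy
end

section
/- Let u ∈ R^K be a probability vector (u_a ≥ 0, Σ_a u_a = 1) and q ∈ R^K nonnegative with Σ_a q_a ≤ L, where 0 < Kμ < 1 and L ≥ 1. Then Σ_a (L·u_a·q_a)/((1−Kμ)·q_a + K·L·μ·u_a) ≤ L. -/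
/-! Each summand is the harmonic mean of `L u_a` and `q_a` with weights `1 - Kμ` and `Kμ`, hence at
most their arithmetic mean; summing the arithmetic means gives `(1 - Kμ) L + Kμ ∑ q_a ≤ L`. -/

open Finset

/-- The left-hand side is the weighted harmonic mean `1 / (w₁ / x + w₂ / y)` of `x` and `y`,
written so that it also makes sense when `x` or `y` vanishes. -/
theorem weighted_harm_mean_two_le_arith_mean {w₁ w₂ x y : ℝ} (hw₁ : 0 ≤ w₁) (hw₂ : 0 ≤ w₂)
    (hw : w₁ + w₂ = 1) (hx : 0 ≤ x) (hy : 0 ≤ y) :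
    x * y / (w₁ * y + w₂ * x) ≤ w₁ * x + w₂ * y := by
  rcases (by positivity : 0 ≤ w₁ * y + w₂ * x).eq_or_lt with hzero | hpos
  · rw [← hzero, div_zero]
    positivity
  rw [div_le_iff₀ hpos]
  have gap : (w₁ * x + w₂ * y) * (w₁ * y + w₂ * x) - x * y = w₁ * w₂ * (x - y) ^ 2 := by
    linear_combination (w₁ + w₂ + 1) * x * y * hw
  nlinarith [mul_nonneg (mul_nonneg hw₁ hw₂) (sq_nonneg (x - y))]

theorem jensen_shrink_bound_general (K : ℕ) (L μ : ℝ) (hμ : 0 < μ)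
    (hKμ : (K : ℝ) * μ < 1)
    (u q : Fin K → ℝ) (hu : ∀ a, 0 ≤ u a) (husum : ∑ a, u a = 1)
    (hq : ∀ a, 0 ≤ q a) (hqsum : ∑ a, q a ≤ L) :
    ∑ a, (L * u a * q a) / ((1 - (K : ℝ) * μ) * q a + (K : ℝ) * L * μ * u a) ≤ L := by
  have hL : 0 ≤ L := (sum_nonneg fun a _ => hq a).trans hqsum
  have hw : 0 ≤ (K : ℝ) * μ := by positivity
  calc ∑ a, (L * u a * q a) / ((1 - (K : ℝ) * μ) * q a + (K : ℝ) * L * μ * u a)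
      ≤ ∑ a, ((1 - (K : ℝ) * μ) * (L * u a) + (K : ℝ) * μ * q a) := by
        gcongr with a
        have h := weighted_harm_mean_two_le_arith_mean (by linarith) hw (sub_add_cancel 1 _)
          (mul_nonneg hL (hu a)) (hq a)
        exact le_of_eq_of_le (by ring) h
    _ = (1 - (K : ℝ) * μ) * L * ∑ a, u a + (K : ℝ) * μ * ∑ a, q a := by
        rw [sum_add_distrib, mul_sum, mul_sum]
        simp only [mul_assoc]
    _ ≤ (1 - (K : ℝ) * μ) * L * 1 + (K : ℝ) * μ * L := by
        rw [husum]
        gcongr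
    _ = L := by ring

/-- Jensen-type bound used in the shrinking-update analysis:
Σ_a L·u_a·q_a / ((1−Kμ)q_a + KLμ·u_a) ≤ L. -/
theorem jensen_shrink_bound (K : ℕ) (hK : 1 ≤ K) (L μ : ℝ) (hL : 1 ≤ L) (hμ : 0 < μ)
    (hKμ : (K : ℝ) * μ < 1)
    (u q : Fin K → ℝ) (hu : ∀ a, 0 ≤ u a) (husum : ∑ a, u a = 1)
    (hq : ∀ a, 0 ≤ q a) (hqsum : ∑ a, q a ≤ L) :
    ∑ a, (L * u a * q a) / ((1 - (K : ℝ) * μ) * q a + (K : ℝ) * L * μ * u a) ≤ L :=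
  jensen_shrink_bound_general K L μ hμ hKμ u q hu husum hq hqsum
end
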